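/- arXiv:1801.09187 — 4 statements merged into one kernel-verified Lean document; each statement's English description precedes it below -/
import Mathlib

section
/- Let 𝒦 be a complex Hilbert space, A a bounded self-adjoint operator on 𝒦, g ∈ 𝒦, Ω ∈ ℝ and λ > 0. On ℋ = ℂ × 𝒦 define the bounded self-adjoint operators h₀(c,ψ) = (Ω·c, Aψ) and h = h₀ + λV, where V(c,ψ) = (⟨g,ψ⟩, c·g). Then for every z ∈ ℂ with Im z ≠ 0 the operators z − h₀ and z − h are boundedly invertible and (z − h)⁻¹ = (z − h₀)⁻¹ + B(z)(z − h₀)⁻¹, where, writing η(z) = z − Ω − λ²⟨g,(z − A)⁻¹g⟩, e₀ = (1,0) ∈ ℋ, ĝ = (0,g) ∈ ℋ, w(z) = (0,(z − A)⁻¹g) ∈ ℋ, and (ξ ⊗ ζ)ψ := ⟨ζ,ψ⟩ξ, one has B(z) = λ²(⟨g,(z−A)⁻¹g⟩/η(z)) e₀⊗e₀ + λ((z−Ω)/η(z)) w(z)⊗e₀ + (λ/η(z)) e₀⊗ĝ + (λ²/η(z)) w(z)⊗ĝ. -/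
/-! `A`, `h₀` and `h` are self-adjoint, so a non-real `z` lies outside their spectra. The
perturbation `V = e₀ ⊗ ĝ + ĝ ⊗ e₀` has rank two, and `z - h₀` maps `e₀` to `(z - Ω) e₀` and
`w` to `ĝ`, so `(z - h)(1 + B) = z - h₀` is a computation in the span of `e₀, ĝ, w`: a `2 × 2`
linear system with determinant `η`. Finally `Im η = Im z (1 + λ² ‖(z - A)⁻¹ g‖²) ≠ 0`. -/

open scoped ComplexInnerProductSpace

/-- The rank-one operator `(ξ ⊗ ζ) ψ = ⟪ζ, ψ⟫ ξ`. -/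
noncomputable def rankOne {H : Type*} [NormedAddCommGroup H]
    [InnerProductSpace ℂ H] (ξ ζ : H) : H →L[ℂ] H :=
  (innerSL ℂ ζ).smulRight ξ

lemma IsSelfAdjoint.isUnit_smul_one_sub {A : Type*} [CStarAlgebra A] {a : A}
    (ha : IsSelfAdjoint a) {z : ℂ} (hz : z.im ≠ 0) : IsUnit (z • (1 : A) - a) := by
  have : z ∉ spectrum ℂ a := fun hmem => hz (ha.im_eq_zero_of_mem_spectrum hmem)
  rwa [spectrum.notMem_iff, Algebra.algebraMap_eq_smul_one] at this

lemma Ring.inverse_eq_mul_inverse_of_mul_eq {M : Type*} [MonoidWithZero M] {a b c : M}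
    (ha : IsUnit a) (hb : IsUnit b) (hbc : b * c = a) :
    Ring.inverse b = c * Ring.inverse a := by
  calc Ring.inverse b = Ring.inverse b * a * Ring.inverse a := by
        rw [mul_assoc, Ring.mul_inverse_cancel a ha, mul_one]
    _ = c * Ring.inverse a := by
        rw [← hbc, ← mul_assoc, Ring.inverse_mul_cancel b hb, one_mul]

section ImaginaryPart

variable {K : Type*} [NormedAddCommGroup K] [InnerProductSpace ℂ K]

lemma LinearMap.IsSymmetric.im_inner_smul_sub_apply_self {T : K →ₗ[ℂ] K} (hT : T.IsSymmetric)
    (z : ℂ) (u : K) : (⟪z • u - T u, u⟫).im = -z.im * ‖u‖ ^ 2 := by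
  have hTu : (⟪T u, u⟫).im = 0 := hT.im_inner_apply_self u
  rw [inner_sub_left, inner_smul_left, inner_self_eq_norm_sq_to_K, Complex.sub_im, hTu]
  simp [← Complex.ofReal_pow, Complex.mul_im]

lemma LinearMap.IsSymmetric.sub_sub_mul_inner_ne_zero {T : K →ₗ[ℂ] K} (hT : T.IsSymmetric)
    {z : ℂ} (hz : z.im ≠ 0) (Ω L : ℝ) (u : K) :
    z - Ω - (L : ℂ) ^ 2 * ⟪z • u - T u, u⟫ ≠ 0 := by
  have him : (z - Ω - (L : ℂ) ^ 2 * ⟪z • u - T u, u⟫).im = z.im * (1 + L ^ 2 * ‖u‖ ^ 2) := by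
    rw [← Complex.ofReal_pow]
    simp only [Complex.sub_im, Complex.im_ofReal_mul, Complex.ofReal_im,
      hT.im_inner_smul_sub_apply_self]
    ring
  intro h
  rw [h, Complex.zero_im, eq_comm] at him
  exact hz ((mul_eq_zero.mp him).resolve_right (by positivity))

end ImaginaryPart

section RankOne

variable {H : Type*} [NormedAddCommGroup H] [InnerProductSpace ℂ H]

lemma rankOne_eq_innerProductSpace_rankOne (ξ ζ : H) :
    rankOne ξ ζ = InnerProductSpace.rankOne ℂ ξ ζ := rfl

lemma isSelfAdjoint_rankOne_add_rankOne [CompleteSpace H] (ξ ζ : H) :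
    IsSelfAdjoint (rankOne ξ ζ + rankOne ζ ξ) := by
  have := IsSelfAdjoint.add_star_self (InnerProductSpace.rankOne ℂ ξ ζ)
  rwa [ContinuousLinearMap.star_eq_adjoint, InnerProductSpace.adjoint_rankOne] at this

/-- `B(z)` of the resolvent formula, with `μ = z - Ω`, `α = ⟪g, (z - A)⁻¹ g⟫` and
`η = μ - L² α`. -/
noncomputable def resolventCorrection (L μ α : ℂ) (e gHat w : H) : H →L[ℂ] H :=
  (L ^ 2 * (α / (μ - L ^ 2 * α))) • rankOne e e + (L * (μ / (μ - L ^ 2 * α))) • rankOne w e +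
    (L / (μ - L ^ 2 * α)) • rankOne e gHat + (L ^ 2 / (μ - L ^ 2 * α)) • rankOne w gHat

lemma sub_smul_mul_one_add_resolventCorrection {T : H →L[ℂ] H} {e gHat w : H} {L μ α : ℂ}
    (hη : μ - L ^ 2 * α ≠ 0) (he : T e = μ • e) (hw : T w = gHat)
    (hee : ⟪e, e⟫ = 1) (hge : ⟪gHat, e⟫ = 0) (hew : ⟪e, w⟫ = 0) (hgw : ⟪gHat, w⟫ = α) :
    (T - L • (rankOne e gHat + rankOne gHat e)) * (1 + resolventCorrection L μ α e gHat w) = T := by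
  have hTB : T * resolventCorrection L μ α e gHat w =
      L • ((rankOne e gHat + rankOne gHat e) * (1 + resolventCorrection L μ α e gHat w)) := by
    simp only [resolventCorrection, rankOne_eq_innerProductSpace_rankOne, mul_add, add_mul,
      mul_one, mul_smul_comm, ContinuousLinearMap.mul_def, InnerProductSpace.comp_rankOne,
      InnerProductSpace.rankOne_apply, he, hw, map_smul, map_zero, smul_apply,
      zero_apply, hee, hge, hew, hgw, zero_smul, add_zero, zero_add,
      one_smul, smul_smul, smul_add]
    match_scalars <;> field_simp <;> ring
  rw [sub_mul, mul_one_add T, smul_mul_assoc, hTB, add_sub_cancel_right]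

lemma ring_inverse_sub_smul_rankOne_add_rankOne {T : H →L[ℂ] H} {e gHat w : H} {L μ α : ℂ}
    (hT : IsUnit T) (hTV : IsUnit (T - L • (rankOne e gHat + rankOne gHat e)))
    (hη : μ - L ^ 2 * α ≠ 0) (he : T e = μ • e) (hw : T w = gHat)
    (hee : ⟪e, e⟫ = 1) (hge : ⟪gHat, e⟫ = 0) (hew : ⟪e, w⟫ = 0) (hgw : ⟪gHat, w⟫ = α) :
    Ring.inverse (T - L • (rankOne e gHat + rankOne gHat e)) =
      Ring.inverse T + resolventCorrection L μ α e gHat w * Ring.inverse T := by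
  rw [Ring.inverse_eq_mul_inverse_of_mul_eq hT hTV
    (sub_smul_mul_one_add_resolventCorrection hη he hw hee hge hew hgw), add_mul, one_mul]

end RankOne

section ProductSpace

variable {𝕜 E F : Type*} [RCLike 𝕜] [NormedAddCommGroup E] [InnerProductSpace 𝕜 E] [CompleteSpace E]
  [NormedAddCommGroup F] [InnerProductSpace 𝕜 F] [CompleteSpace F]

lemma isSelfAdjoint_of_apply_toLp_prod {T : WithLp 2 (E × F) →L[𝕜] WithLp 2 (E × F)}
    {S : E →L[𝕜] E} {R : F →L[𝕜] F} (hS : IsSelfAdjoint S) (hR : IsSelfAdjoint R)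
    (hT : ∀ x y, T (WithLp.toLp 2 (x, y)) = WithLp.toLp 2 (S x, R y)) : IsSelfAdjoint T := by
  rw [ContinuousLinearMap.isSelfAdjoint_iff_isSymmetric] at hS hR ⊢
  rintro ⟨x, y⟩ ⟨x', y'⟩
  simp only [ContinuousLinearMap.coe_coe, hT, WithLp.prod_inner_apply]
  exact congrArg₂ (· + ·) (hS x x') (hR y y')

end ProductSpace

section CoupledModel

variable {K : Type*} [NormedAddCommGroup K] [InnerProductSpace ℂ K]

lemma eq_rankOne_add_rankOne_of_apply_toLp {V : WithLp 2 (ℂ × K) →L[ℂ] WithLp 2 (ℂ × K)} {g : K}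
    (hV : ∀ (c : ℂ) (ψ : K), V (WithLp.toLp 2 (c, ψ)) = WithLp.toLp 2 (⟪g, ψ⟫, c • g)) :
    V = rankOne (WithLp.toLp 2 (1, 0)) (WithLp.toLp 2 (0, g)) +
      rankOne (WithLp.toLp 2 (0, g)) (WithLp.toLp 2 (1, 0)) := by
  ext ⟨c, ψ⟩ : 1
  simp [hV, rankOne_eq_innerProductSpace_rankOne, WithLp.prod_inner_apply, ← WithLp.toLp_smul,
    ← WithLp.toLp_add]

end CoupledModel

theorem stmt_0_general {K : Type*} [NormedAddCommGroup K] [InnerProductSpace ℂ K]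
    [CompleteSpace K] (A : K →L[ℂ] K) (hA : IsSelfAdjoint A) (g : K)
    (Ω : ℝ) (lam : ℝ)
    (h₀ h V : WithLp 2 (ℂ × K) →L[ℂ] WithLp 2 (ℂ × K))
    (hh₀ : ∀ (c : ℂ) (ψ : K),
      h₀ ((WithLp.equiv 2 (ℂ × K)).symm (c, ψ)) =
        (WithLp.equiv 2 (ℂ × K)).symm ((Ω : ℂ) * c, A ψ))
    (hV : ∀ (c : ℂ) (ψ : K),
      V ((WithLp.equiv 2 (ℂ × K)).symm (c, ψ)) =
        (WithLp.equiv 2 (ℂ × K)).symm ((⟪g, ψ⟫ : ℂ), c • g))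
    (hh : h = h₀ + (lam : ℂ) • V)
    (z : ℂ) (hz : z.im ≠ 0) :
    IsUnit (z • (1 : K →L[ℂ] K) - A) ∧
    IsUnit (z • (1 : WithLp 2 (ℂ × K) →L[ℂ] WithLp 2 (ℂ × K)) - h₀) ∧
    IsUnit (z • (1 : WithLp 2 (ℂ × K) →L[ℂ] WithLp 2 (ℂ × K)) - h) ∧
    (let RA : K →L[ℂ] K := Ring.inverse (z • (1 : K →L[ℂ] K) - A);
     let η : ℂ := z - (Ω : ℂ) - (lam : ℂ) ^ 2 * ⟪g, RA g⟫;
     let e₀ : WithLp 2 (ℂ × K) := (WithLp.equiv 2 (ℂ × K)).symm (1, 0);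
     let gHat : WithLp 2 (ℂ × K) := (WithLp.equiv 2 (ℂ × K)).symm (0, g);
     let w : WithLp 2 (ℂ × K) := (WithLp.equiv 2 (ℂ × K)).symm (0, RA g);
     let B : WithLp 2 (ℂ × K) →L[ℂ] WithLp 2 (ℂ × K) :=
       ((lam : ℂ) ^ 2 * (⟪g, RA g⟫ / η)) • rankOne e₀ e₀ +
         ((lam : ℂ) * ((z - (Ω : ℂ)) / η)) • rankOne w e₀ +
         ((lam : ℂ) / η) • rankOne e₀ gHat +
         ((lam : ℂ) ^ 2 / η) • rankOne w gHat;
     Ring.inverse (z • (1 : WithLp 2 (ℂ × K) →L[ℂ] WithLp 2 (ℂ × K)) - h) =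
       Ring.inverse (z • (1 : WithLp 2 (ℂ × K) →L[ℂ] WithLp 2 (ℂ × K)) - h₀) +
         B * Ring.inverse
           (z • (1 : WithLp 2 (ℂ × K) →L[ℂ] WithLp 2 (ℂ × K)) - h₀)) := by
  simp only [WithLp.equiv_symm_apply] at hh₀ hV
  have hV' := eq_rankOne_add_rankOne_of_apply_toLp hV
  have hreal (r : ℝ) : IsSelfAdjoint (r : ℂ) :=
    (Complex.im_eq_zero_iff_isSelfAdjoint _).mp (Complex.ofReal_im r)
  have hh₀_sa : IsSelfAdjoint h₀ := isSelfAdjoint_of_apply_toLp_prod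
    ((hreal Ω).smul (.one _) : IsSelfAdjoint ((Ω : ℂ) • (1 : ℂ →L[ℂ] ℂ))) hA (by simpa using hh₀)
  have hh_sa : IsSelfAdjoint h := by
    rw [hh, hV']
    exact hh₀_sa.add ((hreal lam).smul (isSelfAdjoint_rankOne_add_rankOne
      (WithLp.toLp 2 ((1 : ℂ), (0 : K))) (WithLp.toLp 2 (0, g))))
  have hUA := hA.isUnit_smul_one_sub hz
  have hU₀ := hh₀_sa.isUnit_smul_one_sub hz
  have hU := hh_sa.isUnit_smul_one_sub hz
  refine ⟨hUA, hU₀, hU, ?_⟩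
  intro RA η e₀ gHat w B
  have hRA : z • RA g - A (RA g) = g := by
    simpa using congrArg (· g) (Ring.mul_inverse_cancel _ hUA)
  have hres₀ (c : ℂ) (ψ : K) : (z • 1 - h₀) (WithLp.toLp 2 (c, ψ)) =
      WithLp.toLp 2 ((z - Ω) * c, z • ψ - A ψ) := by
    simp [hh₀, ← WithLp.toLp_smul, ← WithLp.toLp_sub, sub_mul]
  have hsplit : z • 1 - h = z • 1 - h₀ - (lam : ℂ) • (rankOne e₀ gHat + rankOne gHat e₀) := by
    rw [hh, hV']; abel
  rw [hsplit] at hU ⊢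
  have hη : η ≠ 0 := by
    simpa [hRA] using hA.isSymmetric.sub_sub_mul_inner_ne_zero hz Ω lam (RA g)
  refine ring_inverse_sub_smul_rankOne_add_rankOne hU₀ hU hη ?_ ?_ ?_ ?_ ?_ ?_
  · simp [e₀, hres₀, ← WithLp.toLp_smul]
  · simp [w, gHat, hres₀, hRA]
  all_goals simp [e₀, gHat, w, WithLp.prod_inner_apply]

/-- Resolvent formula for the coupled one-particle Hamiltonian: on
`ℋ = ℂ ×₂ 𝒦` let `h₀(c,ψ) = (Ωc, Aψ)` and `h = h₀ + λV` with
`V(c,ψ) = (⟪g,ψ⟫, c•g)`.  For `Im z ≠ 0` the operators `z - A`, `z - h₀`,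
`z - h` are invertible and
`(z - h)⁻¹ = (z - h₀)⁻¹ + B(z)(z - h₀)⁻¹`, where, with
`η(z) = z - Ω - λ²⟪g,(z - A)⁻¹g⟫`, `e₀ = (1,0)`, `gHat = (0,g)`,
`w(z) = (0,(z - A)⁻¹g)`,
`B(z) = λ²(⟪g,(z-A)⁻¹g⟫/η) e₀⊗e₀ + λ((z-Ω)/η) w⊗e₀ + (λ/η) e₀⊗gHat + (λ²/η) w⊗gHat`. -/
theorem stmt_0 {K : Type*} [NormedAddCommGroup K] [InnerProductSpace ℂ K]
    [CompleteSpace K] (A : K →L[ℂ] K) (hA : IsSelfAdjoint A) (g : K)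
    (Ω : ℝ) (lam : ℝ) (hlam : 0 < lam)
    (h₀ h V : WithLp 2 (ℂ × K) →L[ℂ] WithLp 2 (ℂ × K))
    (hh₀ : ∀ (c : ℂ) (ψ : K),
      h₀ ((WithLp.equiv 2 (ℂ × K)).symm (c, ψ)) =
        (WithLp.equiv 2 (ℂ × K)).symm ((Ω : ℂ) * c, A ψ))
    (hV : ∀ (c : ℂ) (ψ : K),
      V ((WithLp.equiv 2 (ℂ × K)).symm (c, ψ)) =
        (WithLp.equiv 2 (ℂ × K)).symm ((⟪g, ψ⟫ : ℂ), c • g))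
    (hh : h = h₀ + (lam : ℂ) • V)
    (z : ℂ) (hz : z.im ≠ 0) :
    IsUnit (z • (1 : K →L[ℂ] K) - A) ∧
    IsUnit (z • (1 : WithLp 2 (ℂ × K) →L[ℂ] WithLp 2 (ℂ × K)) - h₀) ∧
    IsUnit (z • (1 : WithLp 2 (ℂ × K) →L[ℂ] WithLp 2 (ℂ × K)) - h) ∧
    (let RA : K →L[ℂ] K := Ring.inverse (z • (1 : K →L[ℂ] K) - A);
     let η : ℂ := z - (Ω : ℂ) - (lam : ℂ) ^ 2 * ⟪g, RA g⟫;
     let e₀ : WithLp 2 (ℂ × K) := (WithLp.equiv 2 (ℂ × K)).symm (1, 0);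
     let gHat : WithLp 2 (ℂ × K) := (WithLp.equiv 2 (ℂ × K)).symm (0, g);
     let w : WithLp 2 (ℂ × K) := (WithLp.equiv 2 (ℂ × K)).symm (0, RA g);
     let B : WithLp 2 (ℂ × K) →L[ℂ] WithLp 2 (ℂ × K) :=
       ((lam : ℂ) ^ 2 * (⟪g, RA g⟫ / η)) • rankOne e₀ e₀ +
         ((lam : ℂ) * ((z - (Ω : ℂ)) / η)) • rankOne w e₀ +
         ((lam : ℂ) / η) • rankOne e₀ gHat +
         ((lam : ℂ) ^ 2 / η) • rankOne w gHat;
     Ring.inverse (z • (1 : WithLp 2 (ℂ × K) →L[ℂ] WithLp 2 (ℂ × K)) - h) =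
       Ring.inverse (z • (1 : WithLp 2 (ℂ × K) →L[ℂ] WithLp 2 (ℂ × K)) - h₀) +
         B * Ring.inverse
           (z • (1 : WithLp 2 (ℂ × K) →L[ℂ] WithLp 2 (ℂ × K)) - h₀)) :=
  stmt_0_general A hA g Ω lam h₀ h V hh₀ hV hh z hz
end

section
/- Let G be an undirected graph on a countable vertex set VG with no loops and no multiple edges and bounded degree, let A_G be its adjacency operator on ℓ²(VG), (A_G ξ)(x) = Σ_{y∈N(x)} ξ(y), and let Φ : VG → ℝ satisfy: (i) there is c ≥ 0 with |Φ(x) − Φ(y)| ≤ c for adjacent x, y, and (ii) for all x, y ∈ VG, Σ_{z∈N(x)∩N(y)} (2Φ(z) − Φ(x) − Φ(y)) = 0. Define K on ℓ²(VG) by (Kξ)(x) = i Σ_{y∈N(x)} (Φ(y) − Φ(x)) ξ(y). Then K and A_G commute: K A_G = A_G K. -/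
lemma swap_sum_key {V : Type*} [DecidableEq V] (G : SimpleGraph V)
    [DecidableRel G.Adj] [G.LocallyFinite] (Φ : V → ℝ)
    (hadapt : ∀ x y : V,
      ∑ z ∈ G.neighborFinset x ∩ G.neighborFinset y,
        (2 * Φ z - Φ x - Φ y) = 0)
    (ξ : V → ℂ) (x : V) :
    ∑ y ∈ G.neighborFinset x, ∑ z ∈ G.neighborFinset y,
      ((2 * Φ y - Φ x - Φ z : ℝ) : ℂ) * ξ z = 0 := by
  classical
  set T : Finset V := (G.neighborFinset x).biUnion (fun y => G.neighborFinset y) with hT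
  have hsub : ∀ y ∈ G.neighborFinset x, G.neighborFinset y ⊆ T := by
    intro y hy z hz
    exact Finset.mem_biUnion.2 ⟨y, hy, hz⟩
  have h1 : ∀ y ∈ G.neighborFinset x,
      ∑ z ∈ G.neighborFinset y, ((2 * Φ y - Φ x - Φ z : ℝ) : ℂ) * ξ z
        = ∑ z ∈ T, if z ∈ G.neighborFinset y
            then ((2 * Φ y - Φ x - Φ z : ℝ) : ℂ) * ξ z else 0 := by
    intro y hy
    rw [Finset.sum_ite_mem]
    congr 1
    exact (Finset.inter_eq_right.2 (hsub y hy)).symm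
  rw [Finset.sum_congr rfl h1, Finset.sum_comm]
  apply Finset.sum_eq_zero
  intro z _
  have h2 : ∑ y ∈ G.neighborFinset x,
      (if z ∈ G.neighborFinset y then ((2 * Φ y - Φ x - Φ z : ℝ) : ℂ) * ξ z else 0)
      = (∑ y ∈ G.neighborFinset x ∩ G.neighborFinset z,
          ((2 * Φ y - Φ x - Φ z : ℝ) : ℂ)) * ξ z := by
    rw [Finset.sum_mul, ← Finset.sum_filter]
    congr 1
    ext y
    simp [SimpleGraph.adj_comm, and_comm]
  rw [h2]
  have := hadapt x z
  have : ((∑ y ∈ G.neighborFinset x ∩ G.neighborFinset z,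
      (2 * Φ y - Φ x - Φ z) : ℝ) : ℂ) = 0 := by rw [this]; norm_num
  rw [Complex.ofReal_sum] at this
  rw [this, zero_mul]

/-- For an adapted graph `(G, Φ)` (bounded increments of `Φ` along edges and
`Σ_{z∈N(x)∩N(y)} (2Φ(z) - Φ(x) - Φ(y)) = 0` for all `x, y`), the adjacency
operator `A_G` and the operator `(Kξ)(x) = i Σ_{y∼x} (Φ(y) - Φ(x)) ξ(y)`
commute on `ℓ²(VG)`. -/
theorem stmt_10 {V : Type*} [Countable V] [DecidableEq V] (G : SimpleGraph V)
    [DecidableRel G.Adj] [G.LocallyFinite]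
    (D : ℕ) (hD : ∀ x : V, G.degree x ≤ D)
    (Φ : V → ℝ) (c : ℝ) (hc0 : 0 ≤ c)
    (hc : ∀ x y : V, G.Adj x y → |Φ x - Φ y| ≤ c)
    (hadapt : ∀ x y : V,
      ∑ z ∈ G.neighborFinset x ∩ G.neighborFinset y,
        (2 * Φ z - Φ x - Φ y) = 0)
    (A K : lp (fun _ : V => ℂ) 2 →L[ℂ] lp (fun _ : V => ℂ) 2)
    (hA : ∀ (ξ : lp (fun _ : V => ℂ) 2) (x : V),
      (A ξ : ∀ _ : V, ℂ) x = ∑ y ∈ G.neighborFinset x, (ξ : ∀ _ : V, ℂ) y)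
    (hK : ∀ (ξ : lp (fun _ : V => ℂ) 2) (x : V),
      (K ξ : ∀ _ : V, ℂ) x =
        Complex.I * ∑ y ∈ G.neighborFinset x,
          (((Φ y : ℂ) - (Φ x : ℂ)) * (ξ : ∀ _ : V, ℂ) y)) :
    K * A = A * K := by
  ext ξ x
  have hKA : ((K * A) ξ : ∀ _ : V, ℂ) x =
      Complex.I * ∑ y ∈ G.neighborFinset x, (((Φ y : ℂ) - (Φ x : ℂ)) *
        ∑ z ∈ G.neighborFinset y, (ξ : ∀ _ : V, ℂ) z) := by
    rw [ContinuousLinearMap.mul_apply, hK]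
    congr 1
    exact Finset.sum_congr rfl fun y _ => by rw [hA]
  have hAK : ((A * K) ξ : ∀ _ : V, ℂ) x =
      ∑ y ∈ G.neighborFinset x, (Complex.I *
        ∑ z ∈ G.neighborFinset y, (((Φ z : ℂ) - (Φ y : ℂ)) * (ξ : ∀ _ : V, ℂ) z)) := by
    rw [ContinuousLinearMap.mul_apply, hA]
    exact Finset.sum_congr rfl fun y _ => by rw [hK]
  rw [hKA, hAK, ← Finset.mul_sum]
  have key := swap_sum_key G Φ hadapt (fun z => (ξ : ∀ _ : V, ℂ) z) x
  congr 1
  rw [← sub_eq_zero, ← Finset.sum_sub_distrib, ← key]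
  refine Finset.sum_congr rfl fun y _ => ?_
  rw [Finset.mul_sum, ← Finset.sum_sub_distrib]
  refine Finset.sum_congr rfl fun z _ => ?_
  push_cast
  ring
end

section
/- Let d ≥ 1 and consider the graph ℤ^d with nearest-neighbor adjacency: x ∼ y if and only if Σ_{k=1}^d |x_k − y_k| = 1. Then the function Φ : ℤ^d → ℝ, Φ(x) = Σ_{k=1}^d x_k, is adapted to ℤ^d; namely: (i) |Φ(x) − Φ(y)| ≤ 1 for all adjacent x, y; (ii) for all x, y ∈ ℤ^d, Σ_{z∈N(x)∩N(y)} (2Φ(z) − Φ(x) − Φ(y)) = 0; (iii) for all x, y ∈ ℤ^d, Σ_{z∈N(x)∩N(y)} (Φ(z) − Φ(x))(Φ(z) − Φ(y))(2Φ(z) − Φ(x) − Φ(y)) = 0, where N(x) = {z ∈ ℤ^d : z ∼ x}. -/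
/-- Nearest-neighbor adjacency on `ℤ^d`. -/
def ZdAdj {d : ℕ} (x y : Fin d → ℤ) : Prop :=
  (∑ k : Fin d, |x k - y k|) = 1

lemma neighbors_finite {d : ℕ} (x : Fin d → ℤ) :
    {z : Fin d → ℤ | ZdAdj x z}.Finite := by
  apply Set.Finite.subset (Set.Finite.pi (fun k => Set.finite_Icc (x k - 1) (x k + 1)))
  intro z hz
  simp only [Set.mem_pi, Set.mem_univ, Set.mem_Icc, forall_true_left]
  intro k
  have h1 : |x k - z k| ≤ 1 := by
    calc |x k - z k| ≤ ∑ j : Fin d, |x j - z j| :=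
          Finset.single_le_sum (f := fun j => |x j - z j|) (fun j _ => abs_nonneg _)
            (Finset.mem_univ k)
      _ = 1 := hz
  have h2 := abs_le.mp h1
  constructor <;> [linarith [h2.2]; linarith [h2.1]]

lemma refl_mem {d : ℕ} {x y z : Fin d → ℤ} (hx : ZdAdj x z) (hy : ZdAdj y z) :
    ZdAdj x (x + y - z) ∧ ZdAdj y (x + y - z) := by
  constructor
  · unfold ZdAdj at hy ⊢
    calc (∑ k : Fin d, |x k - (x + y - z) k|) = ∑ k : Fin d, |y k - z k| := by
          apply Finset.sum_congr rfl
          intro k _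
          simp only [Pi.add_apply, Pi.sub_apply]
          rw [abs_sub_comm (y k)]
          ring_nf
      _ = 1 := hy
  · unfold ZdAdj at hx ⊢
    calc (∑ k : Fin d, |y k - (x + y - z) k|) = ∑ k : Fin d, |x k - z k| := by
          apply Finset.sum_congr rfl
          intro k _
          simp only [Pi.add_apply, Pi.sub_apply]
          rw [abs_sub_comm (x k)]
          ring_nf
      _ = 1 := hx

lemma phi_refl {d : ℕ} (x y z : Fin d → ℤ) :
    (∑ k : Fin d, ((x + y - z) k : ℝ)) =
      (∑ k : Fin d, (x k : ℝ)) + (∑ k : Fin d, (y k : ℝ)) - ∑ k : Fin d, (z k : ℝ) := by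
  simp only [Pi.add_apply, Pi.sub_apply, Int.cast_sub, Int.cast_add,
    Finset.sum_sub_distrib, Finset.sum_add_distrib]

lemma phi_fix {d : ℕ} {x y z : Fin d → ℤ} (h : x + y - z = z) :
    2 * (∑ k : Fin d, (z k : ℝ)) - (∑ k : Fin d, (x k : ℝ)) - ∑ k : Fin d, (y k : ℝ) = 0 := by
  have h2 : (∑ k : Fin d, ((x + y - z) k : ℝ)) = ∑ k : Fin d, (z k : ℝ) := by rw [h]
  rw [phi_refl] at h2
  linarith

lemma sum_invol {d : ℕ} (x y : Fin d → ℤ) (f : (Fin d → ℤ) → ℝ)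
    (hneg : ∀ z, ZdAdj x z → ZdAdj y z → f (x + y - z) = - f z)
    (hfix : ∀ z, x + y - z = z → f z = 0) :
    ∑ᶠ z ∈ {z : Fin d → ℤ | ZdAdj x z ∧ ZdAdj y z}, f z = 0 := by
  have hS : {z : Fin d → ℤ | ZdAdj x z ∧ ZdAdj y z}.Finite :=
    (neighbors_finite x).subset (fun z hz => hz.1)
  rw [← hS.coe_toFinset, finsum_mem_coe_finset]
  apply Finset.sum_involution (fun z _ => x + y - z)
  · intro a ha
    rw [Set.Finite.mem_toFinset] at ha
    rw [hneg a ha.1 ha.2]; ring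
  · intro a ha hfa
    intro hcontra
    exact hfa (hfix a hcontra)
  · intro a ha
    rw [Set.Finite.mem_toFinset] at ha ⊢
    exact refl_mem ha.1 ha.2
  · intro a ha
    funext k
    simp only [Pi.add_apply, Pi.sub_apply]
    ring

/-- The function `Φ(x) = Σ_k x_k` is adapted to the graph `ℤ^d`: its increments
along edges are bounded by `1`, and the two sum conditions over common
neighbors from the definition of an adapted function hold. -/
theorem stmt_11 (d : ℕ) (hd : 1 ≤ d) :
    (∀ x y : Fin d → ℤ, ZdAdj x y →
      |(∑ k : Fin d, (x k : ℝ)) - ∑ k : Fin d, (y k : ℝ)| ≤ 1) ∧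
    (∀ x y : Fin d → ℤ,
      ∑ᶠ z ∈ {z : Fin d → ℤ | ZdAdj x z ∧ ZdAdj y z},
        (2 * (∑ k : Fin d, (z k : ℝ)) - (∑ k : Fin d, (x k : ℝ)) -
          ∑ k : Fin d, (y k : ℝ)) = 0) ∧
    (∀ x y : Fin d → ℤ,
      ∑ᶠ z ∈ {z : Fin d → ℤ | ZdAdj x z ∧ ZdAdj y z},
        (((∑ k : Fin d, (z k : ℝ)) - ∑ k : Fin d, (x k : ℝ)) *
          ((∑ k : Fin d, (z k : ℝ)) - ∑ k : Fin d, (y k : ℝ)) *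
          (2 * (∑ k : Fin d, (z k : ℝ)) - (∑ k : Fin d, (x k : ℝ)) -
            ∑ k : Fin d, (y k : ℝ))) = 0) := by
  refine ⟨?_, ?_, ?_⟩
  · intro x y hxy
    have h1 : |∑ k : Fin d, (x k - y k)| ≤ (1 : ℤ) := by
      calc |∑ k : Fin d, (x k - y k)| ≤ ∑ k : Fin d, |x k - y k| :=
            Finset.abs_sum_le_sum_abs _ _
        _ = 1 := hxy
    have h2 : |((∑ k : Fin d, (x k - y k) : ℤ) : ℝ)| ≤ 1 := by
      rw [← Int.cast_abs]
      exact_mod_cast h1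
    calc |(∑ k : Fin d, (x k : ℝ)) - ∑ k : Fin d, (y k : ℝ)|
        = |((∑ k : Fin d, (x k - y k) : ℤ) : ℝ)| := by push_cast; rw [Finset.sum_sub_distrib]
      _ ≤ 1 := h2
  · intro x y
    apply sum_invol
    · intro z hx hy
      rw [phi_refl]
      ring
    · intro z hz
      exact phi_fix hz
  · intro x y
    apply sum_invol
    · intro z hx hy
      rw [phi_refl]
      ring
    · intro z hz
      have := phi_fix hz
      rw [this]
      ring
end

section
/- Let d ≥ 1 and let G_d = ℤ^d ⊣ ℤ be the comb graph with vertex set ℤ^d × ℤ and adjacency: (J,x) ∼ (J',x') if and only if either J = J' and |x − x'| = 1, or x = x' = 0 and Σ_{k=1}^d |J_k − J'_k| = 1. Let θ > 0 be determined by e^θ = d + √(d² + 1) (equivalently 2 cosh θ = 2√(d² + 1)). Then the function w : ℤ^d × ℤ → ℝ, w(J,x) = e^{−θ|x|}, is a Perron–Frobenius weight for the adjacency operator of G_d with eigenvalue 2√(d² + 1): for every (J,x), Σ_{(J',x') ∼ (J,x)} w(J',x') = 2√(d² + 1) · w(J,x), and w(J,x) > 0 for all (J,x). -/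
/-- Adjacency of the comb graph `ℤ^d ⊣ ℤ`: `(J,x) ∼ (J',x')` iff `J = J'` and
`|x - x'| = 1`, or `x = x' = 0` and `Σ_k |J_k - J'_k| = 1`. -/
def CombAdj {d : ℕ} (p q : (Fin d → ℤ) × ℤ) : Prop :=
  (p.1 = q.1 ∧ |p.2 - q.2| = 1) ∨
    (p.2 = 0 ∧ q.2 = 0 ∧ (∑ k : Fin d, |p.1 k - q.1 k|) = 1)

/-!
`e^θ = d + √(d² + 1)` says `θ = arsinh d`, so `cosh θ = √(d² + 1)` and
`e^{-θ} = cosh θ - sinh θ = √(d² + 1) - d`. Away from the spine `x = 0` a vertex has the two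
neighbours `(J, x ± 1)`, whose weights add up to `(e^θ + e^{-θ}) e^{-θ|x|} = 2 cosh θ · w(J,x)`.
A spine vertex `(J,0)` has the two neighbours `(J, ±1)` of weight `e^{-θ}` and the `2d` spine
neighbours of weight `1`, in total `2e^{-θ} + 2d = 2√(d² + 1)`.
-/

open Function Real

theorem Int.sum_abs_eq_one_iff {ι : Type*} [Fintype ι] [DecidableEq ι] {v : ι → ℤ} :
    ∑ i, |v i| = 1 ↔ ∃ i, ∃ s : ℤˣ, v = Pi.single i (s : ℤ) := by
  constructor
  · intro h
    obtain ⟨i, hi⟩ : ∃ i, v i ≠ 0 := by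
      by_contra! h0
      simp [h0] at h
    have hvi : |v i| = 1 := le_antisymm
      (h ▸ Finset.single_le_sum (fun j _ => abs_nonneg (v j)) (Finset.mem_univ i))
      (Int.one_le_abs hi)
    have hrest : ∀ j ≠ i, v j = 0 := by
      have hsplit := Finset.add_sum_erase Finset.univ (fun j => |v j|) (Finset.mem_univ i)
      rw [h, hvi, add_eq_left, Finset.sum_eq_zero_iff_of_nonneg fun j _ => abs_nonneg _] at hsplit
      exact fun j hj => abs_eq_zero.mp (hsplit j (Finset.mem_erase.mpr ⟨hj, Finset.mem_univ j⟩))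
    refine ⟨i, (Int.isUnit_iff_abs_eq.mpr hvi).unit, funext fun j => ?_⟩
    rcases eq_or_ne j i with rfl | hj
    · simp
    · simp [hj, hrest j hj]
  · rintro ⟨i, s, rfl⟩
    simp [Pi.single_apply, apply_ite, Int.isUnit_iff_abs_eq.mp s.isUnit]

theorem exp_neg_mul_add_one_add_exp_neg_mul_sub_one (θ a : ℝ) :
    exp (-θ * (a + 1)) + exp (-θ * (a - 1)) = 2 * cosh θ * exp (-θ * a) := by
  rw [cosh_eq, show -θ * (a + 1) = -θ + -θ * a by ring, show -θ * (a - 1) = θ + -θ * a by ring,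
    exp_add, exp_add]
  ring

theorem Int.exp_neg_mul_abs_add_one_add_exp_neg_mul_abs_sub_one (θ : ℝ) {x : ℤ} (hx : x ≠ 0) :
    exp (-θ * |(x : ℝ) + 1|) + exp (-θ * |(x : ℝ) - 1|) = 2 * cosh θ * exp (-θ * |(x : ℝ)|) := by
  rcases hx.lt_or_gt with hneg | hpos
  · have hx1 : (x : ℝ) ≤ -1 := by exact_mod_cast Int.le_sub_one_of_lt hneg
    rw [abs_of_nonpos (by linarith), abs_of_nonpos (by linarith), abs_of_nonpos (by linarith),
      add_comm, ← exp_neg_mul_add_one_add_exp_neg_mul_sub_one]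
    congr 2 <;> ring
  · have hx1 : (1 : ℝ) ≤ x := by exact_mod_cast hpos
    rw [abs_of_nonneg (by linarith), abs_of_nonneg (by linarith), abs_of_nonneg (by linarith),
      exp_neg_mul_add_one_add_exp_neg_mul_sub_one]

section Comb

variable {d : ℕ} {J : Fin d → ℤ} {x : ℤ}

theorem setOf_combAdj_of_ne_zero (hx : x ≠ 0) :
    {q | CombAdj (J, x) q} = Set.range fun s : ℤˣ => (J, x + s) := by
  ext ⟨J', x'⟩
  simp only [CombAdj, Set.mem_ofPred_eq, Set.mem_range, Prod.mk.injEq, hx, false_and, or_false]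
  rw [abs_sub_comm, ← Int.isUnit_iff_abs_eq]
  constructor
  · rintro ⟨rfl, s, hs⟩
    exact ⟨s, rfl, by omega⟩
  · rintro ⟨s, rfl, rfl⟩
    exact ⟨rfl, s, by ring⟩

def spineNeighbour (J : Fin d → ℤ) : ℤˣ ⊕ (Fin d × ℤˣ) → (Fin d → ℤ) × ℤ :=
  Sum.elim (fun s => (J, s)) fun ks => (J + Pi.single ks.1 (ks.2 : ℤ), 0)

theorem spineNeighbour_injective : Injective (spineNeighbour J) := by
  rintro (s | ⟨k, s⟩) (s' | ⟨k', s'⟩) h <;> simp only [spineNeighbour, Sum.elim_inl,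
    Sum.elim_inr, Prod.mk.injEq, add_right_inj] at h
  · rw [Units.val_inj.mp h.2]
  · exact absurd h.2 s.ne_zero
  · exact absurd h.2.symm s'.ne_zero
  · have hk := congrFun h.1 k
    rcases eq_or_ne k k' with rfl | hne
    · simp only [Pi.single_eq_same, Units.val_inj] at hk
      rw [hk]
    · simp [Pi.single_eq_of_ne hne] at hk

theorem setOf_combAdj_zero : {q | CombAdj (J, 0) q} = Set.range (spineNeighbour J) := by
  ext ⟨J', x'⟩
  simp only [CombAdj, Set.mem_ofPred_eq, Set.mem_range, Sum.exists, spineNeighbour, Sum.elim_inl,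
    Sum.elim_inr, Prod.exists, Prod.mk.injEq, true_and]
  have hsphere : ∑ k, |J k - J' k| = 1 ↔ ∃ k, ∃ s : ℤˣ, J + Pi.single k (s : ℤ) = J' := by
    have hdiff : ∀ k, |J k - J' k| = |(J' - J) k| := fun k => abs_sub_comm _ _
    simp only [hdiff, Int.sum_abs_eq_one_iff, sub_eq_iff_eq_add', @eq_comm _ J']
  rw [abs_sub_comm, sub_zero, ← Int.isUnit_iff_abs_eq, hsphere, eq_comm (a := (0 : ℤ))]
  constructor
  · rintro (⟨rfl, s, rfl⟩ | ⟨rfl, h⟩)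
    · exact Or.inl ⟨s, rfl, rfl⟩
    · exact Or.inr (by simpa using h)
  · rintro (⟨s, rfl, rfl⟩ | ⟨k, s, rfl, rfl⟩)
    · exact Or.inl ⟨rfl, s.isUnit⟩
    · exact Or.inr ⟨rfl, k, s, rfl⟩

theorem finsum_combAdj_of_ne_zero (θ : ℝ) (hx : x ≠ 0) :
    ∑ᶠ q ∈ {q | CombAdj (J, x) q}, exp (-θ * |(q.2 : ℝ)|) = 2 * cosh θ * exp (-θ * |(x : ℝ)|) := by
  rw [setOf_combAdj_of_ne_zero hx,
    finsum_mem_range fun s t h => Units.val_inj.mp (by simpa using h), finsum_eq_sum_of_fintype,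
    UnitsInt.univ, Finset.sum_pair (by decide)]
  push_cast
  rw [← sub_eq_add_neg, Int.exp_neg_mul_abs_add_one_add_exp_neg_mul_abs_sub_one θ hx]

theorem finsum_combAdj_zero (θ : ℝ) :
    ∑ᶠ q ∈ {q | CombAdj (J, 0) q}, exp (-θ * |(q.2 : ℝ)|) = 2 * exp (-θ) + 2 * d := by
  rw [setOf_combAdj_zero, finsum_mem_range spineNeighbour_injective, finsum_eq_sum_of_fintype,
    Fintype.sum_sum_type]
  simp only [UnitsInt.univ, spineNeighbour, Sum.elim_inl, neg_mul, Finset.mem_singleton,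
    units_ne_neg_self, not_false_eq_true, Finset.sum_insert, Units.val_one, Int.cast_one, abs_one,
    mul_one, Finset.sum_singleton, Units.val_neg, Int.reduceNeg, Int.cast_neg, abs_neg, Sum.elim_inr,
    Int.cast_zero, abs_zero, mul_zero, exp_zero, Finset.sum_const, Finset.card_univ,
    Fintype.card_prod, Fintype.card_fin, Fintype.card_units_int, nsmul_eq_mul, Nat.cast_mul,
    Nat.cast_ofNat]
  ring

end Comb

theorem stmt_12_general (d : ℕ) (θ : ℝ)
    (hθeq : Real.exp θ = d + Real.sqrt (d ^ 2 + 1)) :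
    (∀ p : (Fin d → ℤ) × ℤ, 0 < Real.exp (-θ * |(p.2 : ℝ)|)) ∧
    ∀ p : (Fin d → ℤ) × ℤ,
      ∑ᶠ q ∈ {q : (Fin d → ℤ) × ℤ | CombAdj p q},
        Real.exp (-θ * |(q.2 : ℝ)|) =
      2 * Real.sqrt (d ^ 2 + 1) * Real.exp (-θ * |(p.2 : ℝ)|) := by
  obtain rfl : θ = arsinh d := by
    rw [← exp_eq_exp, exp_arsinh, hθeq, add_comm (1 : ℝ)]
  have hcosh : cosh (arsinh d) = √(d ^ 2 + 1) := by rw [cosh_arsinh, add_comm]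
  refine ⟨fun p => exp_pos _, ?_⟩
  rintro ⟨J, x⟩
  rcases eq_or_ne x 0 with rfl | hx
  · rw [finsum_combAdj_zero, ← cosh_sub_sinh, sinh_arsinh, hcosh, Int.cast_zero,
      abs_zero, mul_zero, exp_zero]
    ring
  · rw [finsum_combAdj_of_ne_zero _ hx, hcosh]

/-- The function `w(J,x) = e^{-θ|x|}`, with `e^θ = d + √(d² + 1)`, is a strictly
positive Perron–Frobenius weight for the adjacency operator of the comb graph
`ℤ^d ⊣ ℤ` with eigenvalue `2√(d² + 1)`:
`Σ_{q ∼ p} w(q) = 2√(d² + 1) · w(p)` for every vertex `p`. -/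
theorem stmt_12 (d : ℕ) (hd : 1 ≤ d) (θ : ℝ) (hθ : 0 < θ)
    (hθeq : Real.exp θ = d + Real.sqrt (d ^ 2 + 1)) :
    (∀ p : (Fin d → ℤ) × ℤ, 0 < Real.exp (-θ * |(p.2 : ℝ)|)) ∧
    ∀ p : (Fin d → ℤ) × ℤ,
      ∑ᶠ q ∈ {q : (Fin d → ℤ) × ℤ | CombAdj p q},
        Real.exp (-θ * |(q.2 : ℝ)|) =
      2 * Real.sqrt (d ^ 2 + 1) * Real.exp (-θ * |(p.2 : ℝ)|) :=
  stmt_12_general d θ hθeq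
end
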